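/- The group Ũ₃(ℂ) is the disjoint union of the twelve sets C₁, …, C₁₂ defined as follows (all matrices are of the form [[α,b,c],[0,δ,e],[0,0,1]]): C₁ = {identity}; C₂ = {diag entries (1,1,1), b ≠ 0, e ≠ 0}; C₃ = {diag (1,1,1), b ≠ 0, e = 0}; C₄ = {diag (1,1,1), b = 0, e ≠ 0}; C₅ = {diag (1,1,1), b = e = 0, c ≠ 0}; C₆ = {diag (1,t,1) with t ≠ 0,1 and c(t−1) = be}; C₇ = {diag (1,t,1) with t ≠ 0,1 and c(t−1) ≠ be}; C₈ = {diag (t,1,1) with t ≠ 0,1 and e = 0}; C₉ = {diag (t,1,1) with t ≠ 0,1 and e ≠ 0}; C₁₀ = {diag (t,t,1) with t ≠ 0,1 and b = 0}; C₁₁ = {diag (t,t,1) with t ≠ 0,1 and b ≠ 0}; C₁₂ = {diag (t,s,1) with t,s ≠ 0,1 and t ≠ s}. Moreover, each Cᵢ is invariant under conjugation by elements of Ũ₃(ℂ). -/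

import Mathlib

open Matrix

/-- `3 × 3` matrices over `F`. -/
abbrev M3 (F : Type*) := Matrix (Fin 3) (Fin 3) F

/-- Membership in the group `Ũ₃(F)` of upper triangular `3 × 3` matrices
`[[a,b,c],[0,d,e],[0,0,1]]` with `a, d ≠ 0` and `(3,3)`-entry equal to `1`. -/
def inU3 {F : Type*} [Field F] (A : M3 F) : Prop :=
  A 0 0 ≠ 0 ∧ A 1 1 ≠ 0 ∧ A 2 2 = 1 ∧ A 1 0 = 0 ∧ A 2 0 = 0 ∧ A 2 1 = 0

def C1 : Set (M3 ℂ) := {A | A = !![1, 0, 0; 0, 1, 0; 0, 0, 1]}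

def C2 : Set (M3 ℂ) :=
  {A | ∃ b c e : ℂ, b ≠ 0 ∧ e ≠ 0 ∧ A = !![1, b, c; 0, 1, e; 0, 0, 1]}

def C3 : Set (M3 ℂ) :=
  {A | ∃ b c : ℂ, b ≠ 0 ∧ A = !![1, b, c; 0, 1, 0; 0, 0, 1]}

def C4 : Set (M3 ℂ) :=
  {A | ∃ c e : ℂ, e ≠ 0 ∧ A = !![1, 0, c; 0, 1, e; 0, 0, 1]}

def C5 : Set (M3 ℂ) :=
  {A | ∃ c : ℂ, c ≠ 0 ∧ A = !![1, 0, c; 0, 1, 0; 0, 0, 1]}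

def C6 : Set (M3 ℂ) :=
  {A | ∃ t b c e : ℂ, t ≠ 0 ∧ t ≠ 1 ∧ c * (t - 1) = b * e ∧ A = !![1, b, c; 0, t, e; 0, 0, 1]}

def C7 : Set (M3 ℂ) :=
  {A | ∃ t b c e : ℂ, t ≠ 0 ∧ t ≠ 1 ∧ c * (t - 1) ≠ b * e ∧ A = !![1, b, c; 0, t, e; 0, 0, 1]}

def C8 : Set (M3 ℂ) :=
  {A | ∃ t b c : ℂ, t ≠ 0 ∧ t ≠ 1 ∧ A = !![t, b, c; 0, 1, 0; 0, 0, 1]}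

def C9 : Set (M3 ℂ) :=
  {A | ∃ t b c e : ℂ, t ≠ 0 ∧ t ≠ 1 ∧ e ≠ 0 ∧ A = !![t, b, c; 0, 1, e; 0, 0, 1]}

def C10 : Set (M3 ℂ) :=
  {A | ∃ t c e : ℂ, t ≠ 0 ∧ t ≠ 1 ∧ A = !![t, 0, c; 0, t, e; 0, 0, 1]}

def C11 : Set (M3 ℂ) :=
  {A | ∃ t b c e : ℂ, t ≠ 0 ∧ t ≠ 1 ∧ b ≠ 0 ∧ A = !![t, b, c; 0, t, e; 0, 0, 1]}

def C12 : Set (M3 ℂ) :=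
  {A | ∃ t s b c e : ℂ, t ≠ 0 ∧ t ≠ 1 ∧ s ≠ 0 ∧ s ≠ 1 ∧ t ≠ s ∧
    A = !![t, b, c; 0, s, e; 0, 0, 1]}

/-!
Conjugation `B = P A P⁻¹` inside `Ũ₃` is the relation `P A = B P`, which is linear in the
entries of `A` and `B`. It forces `B` to have the diagonal `(a, d, 1)` of `A` and gives
`b' s = p b + q (d - a)`, `e' = s e + u (1 - d)` and `c' = p c + q e + r (1 - a) - b' u`, where
`p, q, r, s, u` are the entries of `P`. Hence `b = 0` is invariant when `a = d`, `e = 0` when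
`d = 1`, `c (d - 1) = b e` when `a = 1`, and `c = 0` when `a = d = 1` and `b = e = 0`. Each
`Cᵢ` is one leaf of a decision tree built from exactly these tests, which gives covering and
disjointness at once, and invariance follows from that of the tests.
-/

section Conjugation

variable {F : Type*} [Field F]

lemma inU3.eta {A : M3 F} (hA : inU3 A) :
    A = !![A 0 0, A 0 1, A 0 2; 0, A 1 1, A 1 2; 0, 0, 1] := by
  obtain ⟨-, -, h22, h10, h20, h21⟩ := hA
  ext i j
  fin_cases i <;> fin_cases j <;> simp [h22, h10, h20, h21]

lemma inU3.mul {A B : M3 F} (hA : inU3 A) (hB : inU3 B) : inU3 (A * B) := by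
  rw [hA.eta, hB.eta]
  simp [inU3, hA.1, hA.2.1, hB.1, hB.2.1]

variable {P A B Q : M3 F}

lemma entries_of_semiconjBy (hP : inU3 P) (hA : inU3 A) (hB : inU3 B) (h : SemiconjBy P A B) :
    B 0 0 = A 0 0 ∧ B 1 1 = A 1 1 ∧
    B 0 1 * P 1 1 = P 0 0 * A 0 1 + P 0 1 * (A 1 1 - A 0 0) ∧
    B 1 2 = P 1 1 * A 1 2 + P 1 2 * (1 - A 1 1) ∧
    B 0 2 = P 0 0 * A 0 2 + P 0 1 * A 1 2 + P 0 2 * (1 - A 0 0) - B 0 1 * P 1 2 := by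
  unfold SemiconjBy at h
  rw [hP.eta, hA.eta, hB.eta] at h
  simp only [mul_fin_three, mul_zero, zero_mul, add_zero, zero_add, mul_one,
    EmbeddingLike.apply_eq_iff_eq, vecCons_inj, and_true, true_and] at h
  obtain ⟨⟨h00, h01, h02⟩, h11, h12⟩ := h
  have ha : B 0 0 = A 0 0 := mul_left_cancel₀ hP.1 (by rw [h00, mul_comm])
  have hd : B 1 1 = A 1 1 := mul_left_cancel₀ hP.2.1 (by rw [h11, mul_comm])
  refine ⟨ha, hd, ?_, ?_, ?_⟩
  · rw [ha] at h01
    linear_combination -h01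
  · rw [hd] at h12
    linear_combination -h12
  · rw [ha] at h02
    linear_combination -h02

lemma entry01_eq_zero_iff_of_semiconjBy (hP : inU3 P) (hA : inU3 A) (hB : inU3 B)
    (h : SemiconjBy P A B) (had : A 0 0 = A 1 1) : B 0 1 = 0 ↔ A 0 1 = 0 := by
  obtain ⟨-, -, hb, -⟩ := entries_of_semiconjBy hP hA hB h
  rw [had, sub_self, mul_zero, add_zero] at hb
  rw [← mul_eq_zero_iff_right hP.2.1, hb, mul_eq_zero_iff_left hP.1]

lemma entry12_eq_zero_iff_of_semiconjBy (hP : inU3 P) (hA : inU3 A) (hB : inU3 B)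
    (h : SemiconjBy P A B) (hd : A 1 1 = 1) : B 1 2 = 0 ↔ A 1 2 = 0 := by
  obtain ⟨-, -, -, he, -⟩ := entries_of_semiconjBy hP hA hB h
  rw [he, hd, sub_self, mul_zero, add_zero, mul_eq_zero_iff_left hP.2.1]

lemma entry02_eq_zero_iff_of_semiconjBy (hP : inU3 P) (hA : inU3 A) (hB : inU3 B)
    (h : SemiconjBy P A B) (ha : A 0 0 = 1) (hd : A 1 1 = 1) (hb : A 0 1 = 0)
    (he : A 1 2 = 0) : B 0 2 = 0 ↔ A 0 2 = 0 := by
  have hb' : B 0 1 = 0 := (entry01_eq_zero_iff_of_semiconjBy hP hA hB h (ha.trans hd.symm)).2 hb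
  obtain ⟨-, -, -, -, hc⟩ := entries_of_semiconjBy hP hA hB h
  rw [hc, ha, he, hb']
  simp [hP.1]

lemma entry02_mul_sub_eq_of_semiconjBy (hP : inU3 P) (hA : inU3 A) (hB : inU3 B)
    (h : SemiconjBy P A B) (ha : A 0 0 = 1) :
    B 0 2 * (B 1 1 - 1) - B 0 1 * B 1 2 = P 0 0 * (A 0 2 * (A 1 1 - 1) - A 0 1 * A 1 2) := by
  obtain ⟨-, hd, hb, he, hc⟩ := entries_of_semiconjBy hP hA hB h
  rw [ha] at hb hc
  rw [hd]
  linear_combination (A 1 1 - 1) * hc - B 0 1 * he - A 1 2 * hb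

lemma entry02_mul_eq_iff_of_semiconjBy (hP : inU3 P) (hA : inU3 A) (hB : inU3 B)
    (h : SemiconjBy P A B) (ha : A 0 0 = 1) :
    B 0 2 * (B 1 1 - 1) = B 0 1 * B 1 2 ↔ A 0 2 * (A 1 1 - 1) = A 0 1 * A 1 2 := by
  rw [← sub_eq_zero, entry02_mul_sub_eq_of_semiconjBy hP hA hB h ha, mul_eq_zero_iff_left hP.1,
    sub_eq_zero]

variable [DecidableEq F]

def conjClass (A : M3 F) : ℕ :=
  if A 0 0 = 1 then
    if A 1 1 = 1 then
      if A 0 1 = 0 then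
        if A 1 2 = 0 then (if A 0 2 = 0 then 1 else 5) else 4
      else if A 1 2 = 0 then 3 else 2
    else if A 0 2 * (A 1 1 - 1) = A 0 1 * A 1 2 then 6 else 7
  else if A 1 1 = 1 then (if A 1 2 = 0 then 8 else 9)
  else if A 0 0 = A 1 1 then (if A 0 1 = 0 then 10 else 11)
  else 12

lemma conjClass_mem_Icc (A : M3 F) : 1 ≤ conjClass A ∧ conjClass A ≤ 12 := by
  unfold conjClass
  split_ifs <;> simp

lemma conjClass_eq_of_semiconjBy (hP : inU3 P) (hA : inU3 A) (hB : inU3 B)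
    (h : SemiconjBy P A B) : conjClass B = conjClass A := by
  obtain ⟨ha, hd, -⟩ := entries_of_semiconjBy hP hA hB h
  have hb := entry01_eq_zero_iff_of_semiconjBy hP hA hB h
  have he := entry12_eq_zero_iff_of_semiconjBy hP hA hB h
  have hc := entry02_eq_zero_iff_of_semiconjBy hP hA hB h
  have hκ := entry02_mul_eq_iff_of_semiconjBy hP hA hB h
  rw [hd] at hκ
  unfold conjClass
  rw [ha, hd]
  simp +contextual only [hb, he, hc, hκ]

def conjClassSet (k : ℕ) : Set (M3 F) := {A | inU3 A ∧ conjClass A = k}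

lemma conjClassSet_conj {k : ℕ} (hA : A ∈ conjClassSet k) (hP : inU3 P) (hQ : inU3 Q)
    (hPQ : P * Q = 1) : P * A * Q ∈ conjClassSet k := by
  obtain ⟨hA, rfl⟩ := hA
  have hB : inU3 (P * A * Q) := (hP.mul hA).mul hQ
  have h : SemiconjBy P A (P * A * Q) := by
    rw [SemiconjBy, Matrix.mul_assoc _ Q, mul_eq_one_comm.mp hPQ, mul_one]
  exact ⟨hB, conjClass_eq_of_semiconjBy hP hA hB h⟩

end Conjugation

lemma C1_eq_conjClassSet : C1 = conjClassSet 1 := by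
  ext A
  constructor
  · rintro rfl
    simp [conjClassSet, conjClass, inU3]
  · rintro ⟨hA, hk⟩
    unfold conjClass at hk
    rw [hA.eta]
    obtain ⟨ha0, hd0, -⟩ := hA
    split_ifs at hk <;> simp_all [C1]

lemma C2_eq_conjClassSet : C2 = conjClassSet 2 := by
  ext A
  constructor
  · rintro ⟨b, c, e, hb, he, rfl⟩
    simp [conjClassSet, conjClass, inU3, hb, he]
  · rintro ⟨hA, hk⟩
    unfold conjClass at hk
    rw [hA.eta]
    obtain ⟨ha0, hd0, -⟩ := hA
    split_ifs at hk <;> simp_all [C2]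

lemma C3_eq_conjClassSet : C3 = conjClassSet 3 := by
  ext A
  constructor
  · rintro ⟨b, c, hb, rfl⟩
    simp [conjClassSet, conjClass, inU3, hb]
  · rintro ⟨hA, hk⟩
    unfold conjClass at hk
    rw [hA.eta]
    obtain ⟨ha0, hd0, -⟩ := hA
    split_ifs at hk <;> simp_all [C3]

lemma C4_eq_conjClassSet : C4 = conjClassSet 4 := by
  ext A
  constructor
  · rintro ⟨c, e, he, rfl⟩
    simp [conjClassSet, conjClass, inU3, he]
  · rintro ⟨hA, hk⟩
    unfold conjClass at hk
    rw [hA.eta]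
    obtain ⟨ha0, hd0, -⟩ := hA
    split_ifs at hk <;> simp_all [C4]

lemma C5_eq_conjClassSet : C5 = conjClassSet 5 := by
  ext A
  constructor
  · rintro ⟨c, hc, rfl⟩
    simp [conjClassSet, conjClass, inU3, hc]
  · rintro ⟨hA, hk⟩
    unfold conjClass at hk
    rw [hA.eta]
    obtain ⟨ha0, hd0, -⟩ := hA
    split_ifs at hk <;> simp_all [C5]

lemma C6_eq_conjClassSet : C6 = conjClassSet 6 := by
  ext A
  constructor
  · rintro ⟨t, b, c, e, ht0, ht1, hκ, rfl⟩
    simp [conjClassSet, conjClass, inU3, ht0, ht1, hκ]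
  · rintro ⟨hA, hk⟩
    unfold conjClass at hk
    rw [hA.eta]
    obtain ⟨ha0, hd0, -⟩ := hA
    split_ifs at hk <;> simp_all [C6]

lemma C7_eq_conjClassSet : C7 = conjClassSet 7 := by
  ext A
  constructor
  · rintro ⟨t, b, c, e, ht0, ht1, hκ, rfl⟩
    simp [conjClassSet, conjClass, inU3, ht0, ht1, hκ]
  · rintro ⟨hA, hk⟩
    unfold conjClass at hk
    rw [hA.eta]
    obtain ⟨ha0, hd0, -⟩ := hA
    split_ifs at hk <;> simp_all [C7]

lemma C8_eq_conjClassSet : C8 = conjClassSet 8 := by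
  ext A
  constructor
  · rintro ⟨t, b, c, ht0, ht1, rfl⟩
    simp [conjClassSet, conjClass, inU3, ht0, ht1]
  · rintro ⟨hA, hk⟩
    unfold conjClass at hk
    rw [hA.eta]
    obtain ⟨ha0, hd0, -⟩ := hA
    split_ifs at hk <;> simp_all [C8]

lemma C9_eq_conjClassSet : C9 = conjClassSet 9 := by
  ext A
  constructor
  · rintro ⟨t, b, c, e, ht0, ht1, he, rfl⟩
    simp [conjClassSet, conjClass, inU3, ht0, ht1, he]
  · rintro ⟨hA, hk⟩
    unfold conjClass at hk
    rw [hA.eta]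
    obtain ⟨ha0, hd0, -⟩ := hA
    split_ifs at hk <;> simp_all [C9]

lemma C10_eq_conjClassSet : C10 = conjClassSet 10 := by
  ext A
  constructor
  · rintro ⟨t, c, e, ht0, ht1, rfl⟩
    simp [conjClassSet, conjClass, inU3, ht0, ht1]
  · rintro ⟨hA, hk⟩
    unfold conjClass at hk
    rw [hA.eta]
    obtain ⟨ha0, hd0, -⟩ := hA
    split_ifs at hk <;> simp_all [C10]

lemma C11_eq_conjClassSet : C11 = conjClassSet 11 := by
  ext A
  constructor
  · rintro ⟨t, b, c, e, ht0, ht1, hb, rfl⟩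
    simp [conjClassSet, conjClass, inU3, ht0, ht1, hb]
  · rintro ⟨hA, hk⟩
    unfold conjClass at hk
    rw [hA.eta]
    obtain ⟨ha0, hd0, -⟩ := hA
    split_ifs at hk <;> simp_all [C11]

lemma C12_eq_conjClassSet : C12 = conjClassSet 12 := by
  ext A
  constructor
  · rintro ⟨t, s, b, c, e, ht0, ht1, hs0, hs1, hts, rfl⟩
    simp [conjClassSet, conjClass, inU3, ht0, ht1, hs0, hs1, hts]
  · rintro ⟨hA, hk⟩
    unfold conjClass at hk
    rw [hA.eta]
    obtain ⟨ha0, hd0, -⟩ := hA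
    split_ifs at hk <;> simp_all [C12]

lemma classes_eq_map_conjClassSet :
    [C1, C2, C3, C4, C5, C6, C7, C8, C9, C10, C11, C12] = (List.range' 1 12).map conjClassSet := by
  simp [C1_eq_conjClassSet, C2_eq_conjClassSet, C3_eq_conjClassSet, C4_eq_conjClassSet,
    C5_eq_conjClassSet, C6_eq_conjClassSet, C7_eq_conjClassSet, C8_eq_conjClassSet,
    C9_eq_conjClassSet, C10_eq_conjClassSet, C11_eq_conjClassSet, C12_eq_conjClassSet,
    List.range']

lemma setOf_inU3_eq_union :
    {A : M3 ℂ | inU3 A} = C1 ∪ C2 ∪ C3 ∪ C4 ∪ C5 ∪ C6 ∪ C7 ∪ C8 ∪ C9 ∪ C10 ∪ C11 ∪ C12 := by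
  ext A
  obtain ⟨h1, h12⟩ := conjClass_mem_Icc A
  simp only [C1_eq_conjClassSet, C2_eq_conjClassSet, C3_eq_conjClassSet, C4_eq_conjClassSet,
    C5_eq_conjClassSet, C6_eq_conjClassSet, C7_eq_conjClassSet, C8_eq_conjClassSet,
    C9_eq_conjClassSet, C10_eq_conjClassSet, C11_eq_conjClassSet, C12_eq_conjClassSet,
    conjClassSet, Set.mem_union, Set.mem_ofPred_eq, ← and_or_left]
  exact ⟨fun hA => ⟨hA, by omega⟩, And.left⟩

theorem stmt_8 :
    ({A : M3 ℂ | inU3 A} =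
        C1 ∪ C2 ∪ C3 ∪ C4 ∪ C5 ∪ C6 ∪ C7 ∪ C8 ∪ C9 ∪ C10 ∪ C11 ∪ C12) ∧
    List.Pairwise Disjoint [C1, C2, C3, C4, C5, C6, C7, C8, C9, C10, C11, C12] ∧
    (∀ S ∈ [C1, C2, C3, C4, C5, C6, C7, C8, C9, C10, C11, C12],
      ∀ A ∈ S, ∀ P Q : M3 ℂ, inU3 P → inU3 Q → P * Q = 1 → P * A * Q ∈ S) := by
  rw [classes_eq_map_conjClassSet]
  refine ⟨setOf_inU3_eq_union, ?_, ?_⟩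
  · exact List.pairwise_map.2 <| (List.nodup_range' ..).imp fun hkl =>
      Set.disjoint_left.2 fun _ hA hB => hkl (hA.2.symm.trans hB.2)
  · simp only [List.mem_map]
    rintro _ ⟨k, -, rfl⟩ A hA P Q hP hQ hPQ
    exact conjClassSet_conj hA hP hQ hPQ
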